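/- arXiv:2511.23035 — 4 statements merged into one kernel-verified Lean document; each statement's English description precedes it below -/
import Mathlib

section
/- Let T = ℂ[X, Y_1, ..., Y_n] act by differentiation on S = ℂ[x, y_1, ..., y_n], and let F = x^2(y_1^2 + ... + y_n^2) with n ≥ 2. Then the annihilator ideal F^⊥ = {g ∈ T : g ∘ F = 0} equals the ideal (X^3, {Y_1^2 − Y_i^2 : 2 ≤ i ≤ n}, {Y_iY_j : 1 ≤ i < j ≤ n}). -/
/-!
The ideal `I` on the right-hand side annihilates `F = x²(y₁² + ⋯ + yₙ²)`, and modulo `I` every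
polynomial is a combination of the monomials `Xᵃ`, `Xᵃ Yᵢ`, `Xᵃ Y₁²` with `a ≤ 2`: the sum of `I`
and their span contains `1` and is stable under multiplication by the variables (here `n ≥ 2` gives
`Y₁³ = Y₁(Y₁² - Y₂²) + Y₁Y₂·Y₂ ∈ I`). These monomials send `F` to nonzero multiples of
`x²⁻ᵃ(y₁² + ⋯ + yₙ²)`, `x²⁻ᵃ yᵢ` and `x²⁻ᵃ`, and the coefficients of `x²⁻ᵃ y₁²`, `x²⁻ᵃ yᵢ`, `x²⁻ᵃ`
of these images separate them, so no nonzero combination of them annihilates `F`.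
-/

open MvPolynomial
open scoped Classical

/-- Differentiation of `F` by the monomial with exponent vector `m`:
`∂^m F`, defined coefficientwise via descending factorials. -/
noncomputable def contract {σ : Type*} (m : σ →₀ ℕ) (F : MvPolynomial σ ℂ) : MvPolynomial σ ℂ :=
  ∑ k ∈ F.support, monomial (k - m) (F.coeff k * m.prod fun i e => (Nat.descFactorial (k i) e : ℂ))

/-- The apolarity (differentiation) action: `apolar g F = g ∘ F`. -/
noncomputable def apolar {σ : Type*} (g F : MvPolynomial σ ℂ) : MvPolynomial σ ℂ :=
  ∑ m ∈ g.support, g.coeff m • contract m F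

section General

variable {σ : Type*}

theorem descFactorial_prod_eq_zero_iff {m k : σ →₀ ℕ} :
    (m.prod fun i e => ((k i).descFactorial e : ℂ)) = 0 ↔ ¬m ≤ k := by
  simp only [Finsupp.prod_eq_zero_iff, Nat.cast_eq_zero, Nat.descFactorial_eq_zero_iff_lt,
    Finsupp.mem_support_iff, Finsupp.le_def, not_forall, not_le]
  exact ⟨fun ⟨i, _, h⟩ => ⟨i, h⟩, fun ⟨i, h⟩ => ⟨i, by omega, h⟩⟩

theorem coeff_contract (m k : σ →₀ ℕ) (F : MvPolynomial σ ℂ) :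
    (contract m F).coeff k =
      F.coeff (k + m) * m.prod fun i e => (((k + m) i).descFactorial e : ℂ) := by
  simp only [contract, coeff_sum, coeff_monomial]
  rw [Finset.sum_eq_single (k + m)]
  · simp
  · intro j _ hne
    split_ifs with h
    · rw [descFactorial_prod_eq_zero_iff.2, mul_zero]
      exact fun hle => hne (by rw [← h, tsub_add_cancel_of_le hle])
    · rfl
  · intro h
    rw [notMem_support_iff.1 h, zero_mul, if_pos (add_tsub_cancel_right k m)]

theorem contract_eq_zero {m : σ →₀ ℕ} {F : MvPolynomial σ ℂ} (h : ∀ k ∈ F.support, ¬m ≤ k) :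
    contract m F = 0 :=
  Finset.sum_eq_zero fun k hk => by rw [descFactorial_prod_eq_zero_iff.2 (h k hk), mul_zero,
    monomial_zero]

theorem contract_monomial (m k : σ →₀ ℕ) (c : ℂ) :
    contract m (monomial k c) =
      monomial (k - m) (c * m.prod fun i e => ((k i).descFactorial e : ℂ)) := by
  ext t
  rw [coeff_contract, coeff_monomial, coeff_monomial]
  by_cases h : k = t + m
  · subst h
    rw [if_pos rfl, if_pos (add_tsub_cancel_right t m)]
  · rw [if_neg h, zero_mul]
    split_ifs with h'
    · rw [descFactorial_prod_eq_zero_iff.2, mul_zero]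
      exact fun hle => h (by rw [← h', tsub_add_cancel_of_le hle])
    · rfl

theorem contract_add (m : σ →₀ ℕ) (F G : MvPolynomial σ ℂ) :
    contract m (F + G) = contract m F + contract m G := by
  ext k; simp [coeff_contract, add_mul]

theorem contract_sum {ι : Type*} (m : σ →₀ ℕ) (s : Finset ι) (F : ι → MvPolynomial σ ℂ) :
    contract m (∑ j ∈ s, F j) = ∑ j ∈ s, contract m (F j) := by
  ext k; simp [coeff_contract, coeff_sum, Finset.sum_mul]

theorem contract_smul (m : σ →₀ ℕ) (c : ℂ) (F : MvPolynomial σ ℂ) :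
    contract m (c • F) = c • contract m F := by
  ext k; simp [coeff_contract, mul_assoc]

theorem contract_contract (m m' : σ →₀ ℕ) (F : MvPolynomial σ ℂ) :
    contract m (contract m' F) = contract (m + m') F := by
  ext k
  rw [coeff_contract, coeff_contract, coeff_contract, add_assoc, mul_assoc]
  congr 1
  have hprod : ∀ (μ : σ →₀ ℕ) (f : σ → ℕ → ℂ), (∀ i, f i 0 = 1) →
      μ.support ⊆ m.support ∪ m'.support → μ.prod f = ∏ i ∈ m.support ∪ m'.support, f i (μ i) :=
    fun μ f hf hs => Finsupp.prod_of_support_subset μ hs f fun i _ => hf i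
  rw [hprod m' _ (by simp) Finset.subset_union_right, hprod m _ (by simp) Finset.subset_union_left,
    hprod (m + m') _ (by simp) Finsupp.support_add, ← Finset.prod_mul_distrib]
  refine Finset.prod_congr rfl fun i _ => ?_
  simp only [Finsupp.add_apply]
  norm_cast
  have := Nat.descFactorial_mul_descFactorial (n := k i + (m i + m' i))
    (Nat.le_add_left (m' i) (m i))
  rwa [show k i + (m i + m' i) - m' i = k i + m i by omega, Nat.add_sub_cancel, mul_comm] at this

theorem apolar_eq_sum_of_support_subset {g : MvPolynomial σ ℂ} {s : Finset (σ →₀ ℕ)}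
    (hs : g.support ⊆ s) (F : MvPolynomial σ ℂ) : apolar g F = ∑ m ∈ s, g.coeff m • contract m F :=
  Finset.sum_subset hs fun m _ hm => by rw [notMem_support_iff.1 hm, zero_smul]

theorem apolar_add_left (g h F : MvPolynomial σ ℂ) :
    apolar (g + h) F = apolar g F + apolar h F := by
  rw [apolar_eq_sum_of_support_subset support_add,
    apolar_eq_sum_of_support_subset Finset.subset_union_left,
    apolar_eq_sum_of_support_subset Finset.subset_union_right, ← Finset.sum_add_distrib]
  simp only [coeff_add, add_smul]

theorem apolar_sub_left (g h F : MvPolynomial σ ℂ) :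
    apolar (g - h) F = apolar g F - apolar h F := by
  rw [eq_sub_iff_add_eq, ← apolar_add_left, sub_add_cancel]

theorem apolar_zero_left (F : MvPolynomial σ ℂ) : apolar 0 F = 0 := by
  simp [apolar]

theorem apolar_zero_right (g : MvPolynomial σ ℂ) : apolar g 0 = 0 := by
  simp [apolar, contract]

theorem apolar_monomial (m : σ →₀ ℕ) (c : ℂ) (F : MvPolynomial σ ℂ) :
    apolar (monomial m c) F = c • contract m F := by
  rw [apolar_eq_sum_of_support_subset support_monomial_subset, Finset.sum_singleton,
    coeff_monomial, if_pos rfl]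

theorem apolar_mul (g h F : MvPolynomial σ ℂ) : apolar (g * h) F = apolar g (apolar h F) := by
  induction g using MvPolynomial.induction_on' with
  | add p q hp hq => rw [add_mul, apolar_add_left, apolar_add_left, hp, hq]
  | monomial m c =>
    induction h using MvPolynomial.induction_on' with
    | add p q hp hq =>
      rw [mul_add, apolar_add_left, hp, hq, apolar_add_left, apolar_monomial, apolar_monomial,
        apolar_monomial, contract_add, smul_add]
    | monomial m' c' =>
      rw [monomial_mul, apolar_monomial, apolar_monomial, apolar_monomial, contract_smul,
        contract_contract, mul_smul]

theorem coeff_apolar (t : σ →₀ ℕ) (g F : MvPolynomial σ ℂ) :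
    (apolar g F).coeff t = ∑ m ∈ g.support,
      g.coeff m * (F.coeff (t + m) * m.prod fun i e => (((t + m) i).descFactorial e : ℂ)) := by
  simp [apolar, coeff_sum, coeff_contract]

/-- The apolar ideal `F^⊥`. -/
def annihilator (F : MvPolynomial σ ℂ) : Ideal (MvPolynomial σ ℂ) where
  carrier := {g | apolar g F = 0}
  add_mem' {g h} hg hh := by simp_all [apolar_add_left]
  zero_mem' := apolar_zero_left F
  smul_mem' c g hg := by
    simp_all [smul_eq_mul, apolar_mul, apolar_zero_right]

theorem support_subset_of_mem_span_monomial {ι : Type*} {μ : ι → σ →₀ ℕ} {r : MvPolynomial σ ℂ}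
    (hr : r ∈ Submodule.span ℂ (Set.range fun p => monomial (μ p) (1 : ℂ))) :
    ↑r.support ⊆ Set.range μ := by
  induction hr using Submodule.span_induction with
  | mem _ h =>
    obtain ⟨p, rfl⟩ := h
    exact (Finset.coe_subset.2 support_monomial_subset).trans (by simp)
  | zero => simp
  | add _ _ _ _ h₁ h₂ => exact (Finset.coe_subset.2 support_add).trans (by simp [h₁, h₂])
  | smul _ _ _ h => exact (Finset.coe_subset.2 support_smul).trans h

theorem eq_zero_of_apolar_eq_zero {ι : Type*} {μ τ : ι → σ →₀ ℕ} {F r : MvPolynomial σ ℂ}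
    (hsep : ∀ p q, F.coeff (τ p + μ q) ≠ 0 ↔ p = q)
    (hr : r ∈ Submodule.span ℂ (Set.range fun p => monomial (μ p) (1 : ℂ)))
    (h : apolar r F = 0) : r = 0 := by
  have hsupp := support_subset_of_mem_span_monomial hr
  ext m
  rw [coeff_zero]
  by_contra hm
  obtain ⟨p, rfl⟩ := hsupp (mem_support_iff.2 hm)
  -- only `m = μ p` contributes to the coefficient of `τ p` in `apolar r F`
  have hcoeff := congr_arg (coeff (τ p)) h
  rw [coeff_apolar, coeff_zero, Finset.sum_eq_single (μ p)] at hcoeff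
  · refine mul_ne_zero hm (mul_ne_zero ((hsep p p).2 rfl) ?_) hcoeff
    exact descFactorial_prod_eq_zero_iff.not_left.2 le_add_self
  · intro m' hm' hne
    obtain ⟨q, rfl⟩ := hsupp hm'
    rw [not_ne_iff.1 (mt (hsep p q).1 fun hpq => hne (by rw [hpq])), zero_mul, mul_zero]
  · intro hp
    rw [notMem_support_iff.1 hp, zero_mul]

theorem single_add_eq_single_add_iff {a : σ} {u v : ℕ} {f g : σ →₀ ℕ} (hf : f a = 0)
    (hg : g a = 0) : Finsupp.single a u + f = Finsupp.single a v + g ↔ u = v ∧ f = g := by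
  refine ⟨fun h => ?_, fun ⟨hu, hfg⟩ => hu ▸ hfg ▸ rfl⟩
  have hu : u = v := by simpa [hf, hg] using DFunLike.congr_fun h a
  subst hu
  exact ⟨rfl, add_left_cancel h⟩

end General

section SqMulSumSq

variable {n : ℕ}

noncomputable def sqMulSumSq (n : ℕ) : MvPolynomial (Unit ⊕ Fin n) ℂ :=
  X (Sum.inl ()) ^ 2 * ∑ j, X (Sum.inr j) ^ 2

noncomputable def sqMulSumSqExp (j : Fin n) : Unit ⊕ Fin n →₀ ℕ :=
  Finsupp.single (Sum.inl ()) 2 + Finsupp.single (Sum.inr j) 2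

theorem sqMulSumSq_eq_sum_monomial : sqMulSumSq n = ∑ j, monomial (sqMulSumSqExp j) 1 := by
  rw [sqMulSumSq, Finset.mul_sum]
  refine Finset.sum_congr rfl fun j _ => ?_
  rw [X_pow_eq_monomial, X_pow_eq_monomial, monomial_mul, one_mul, sqMulSumSqExp]

theorem coeff_sqMulSumSq_ne_zero_iff {k : Unit ⊕ Fin n →₀ ℕ} :
    (sqMulSumSq n).coeff k ≠ 0 ↔ ∃ j, sqMulSumSqExp j = k := by
  simp [sqMulSumSq_eq_sum_monomial, coeff_sum, coeff_monomial, Finset.sum_boole]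

theorem mem_support_sqMulSumSq {k : Unit ⊕ Fin n →₀ ℕ} :
    k ∈ (sqMulSumSq n).support ↔ ∃ j, sqMulSumSqExp j = k :=
  mem_support_iff.trans coeff_sqMulSumSq_ne_zero_iff

theorem apolar_X_inl_pow_three : apolar (X (Sum.inl ()) ^ 3) (sqMulSumSq n) = 0 := by
  rw [X_pow_eq_monomial, apolar_monomial, contract_eq_zero, smul_zero]
  rintro k hk hle
  obtain ⟨j, rfl⟩ := mem_support_sqMulSumSq.1 hk
  have := Finsupp.single_le_iff.1 hle
  simp [sqMulSumSqExp] at this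

theorem apolar_X_inr_mul_X_inr {i j : Fin n} (hij : i ≠ j) :
    apolar (X (Sum.inr i) * X (Sum.inr j)) (sqMulSumSq n) = 0 := by
  rw [X, X, monomial_mul, apolar_monomial, contract_eq_zero, smul_zero]
  rintro k hk hle
  obtain ⟨l, rfl⟩ := mem_support_sqMulSumSq.1 hk
  have hi := hle (Sum.inr i)
  have hj := hle (Sum.inr j)
  simp only [sqMulSumSqExp, Finsupp.add_apply, Finsupp.single_apply, Sum.inr.injEq,
    reduceCtorEq, if_false] at hi hj
  split_ifs at hi hj <;> omega

theorem apolar_X_inr_sq (i : Fin n) :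
    apolar (X (Sum.inr i) ^ 2) (sqMulSumSq n) = monomial (Finsupp.single (Sum.inl ()) 2) 2 := by
  rw [X_pow_eq_monomial, apolar_monomial, one_smul, sqMulSumSq_eq_sum_monomial, contract_sum,
    Finset.sum_eq_single i]
  · simp [contract_monomial, sqMulSumSqExp, Finsupp.prod_single_index]
  · intro j _ hji
    simp [contract_monomial, sqMulSumSqExp, Finsupp.prod_single_index, Finsupp.single_apply, hji]
  · simp

noncomputable def sqMulSumSqIdeal (i₀ : Fin n) : Ideal (MvPolynomial (Unit ⊕ Fin n) ℂ) :=
  Ideal.span ({(X (Sum.inl ()) : MvPolynomial (Unit ⊕ Fin n) ℂ) ^ 3} ∪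
    {p | ∃ i : Fin n, i ≠ i₀ ∧ p = X (Sum.inr i₀) ^ 2 - X (Sum.inr i) ^ 2} ∪
    {p | ∃ i j : Fin n, i < j ∧ p = X (Sum.inr i) * X (Sum.inr j)})

section Ideal

variable (i₀ : Fin n)

theorem X_inl_pow_three_mem : X (Sum.inl ()) ^ 3 ∈ sqMulSumSqIdeal i₀ :=
  Ideal.subset_span (Or.inl (Or.inl rfl))

theorem X_inr_sq_sub_X_inr_sq_mem (i k : Fin n) :
    X (Sum.inr i) ^ 2 - X (Sum.inr k) ^ 2 ∈ sqMulSumSqIdeal i₀ := by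
  have h : ∀ i, X (Sum.inr i₀) ^ 2 - X (Sum.inr i) ^ 2 ∈ sqMulSumSqIdeal i₀ := fun i => by
    rcases eq_or_ne i i₀ with rfl | hi
    · rw [sub_self]; exact Ideal.zero_mem _
    · exact Ideal.subset_span (Or.inl (Or.inr ⟨i, hi, rfl⟩))
  simpa using Ideal.sub_mem _ (h k) (h i)

theorem X_inr_mul_X_inr_mem {i j : Fin n} (hij : i ≠ j) :
    X (Sum.inr i) * X (Sum.inr j) ∈ sqMulSumSqIdeal i₀ := by
  rcases hij.lt_or_gt with h | h
  · exact Ideal.subset_span (Or.inr ⟨i, j, h, rfl⟩)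
  · rw [mul_comm]; exact Ideal.subset_span (Or.inr ⟨j, i, h, rfl⟩)

theorem X_inr_pow_three_mem {i i₁ : Fin n} (h : i₁ ≠ i) :
    X (Sum.inr i) ^ 3 ∈ sqMulSumSqIdeal i₀ := by
  have e : (X (Sum.inr i) : MvPolynomial (Unit ⊕ Fin n) ℂ) ^ 3 =
      X (Sum.inr i) * (X (Sum.inr i) ^ 2 - X (Sum.inr i₁) ^ 2) +
        X (Sum.inr i) * X (Sum.inr i₁) * X (Sum.inr i₁) := by ring
  rw [e]
  exact Ideal.add_mem _ (Ideal.mul_mem_left _ _ (X_inr_sq_sub_X_inr_sq_mem i₀ _ _))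
    (Ideal.mul_mem_right _ _ (X_inr_mul_X_inr_mem i₀ h.symm))

theorem sqMulSumSqIdeal_le_annihilator : sqMulSumSqIdeal i₀ ≤ annihilator (sqMulSumSq n) := by
  refine Ideal.span_le.2 ?_
  rintro p ((rfl | ⟨i, -, rfl⟩) | ⟨i, j, hij, rfl⟩)
  · exact apolar_X_inl_pow_three
  · exact (apolar_sub_left _ _ _).trans (by rw [apolar_X_inr_sq, apolar_X_inr_sq, sub_self])
  · exact apolar_X_inr_mul_X_inr hij.ne

end Ideal

/-- Indexes the `y`-parts `1`, `yᵢ`, `y_{i₀}²` of the monomials spanning a complement of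
`sqMulSumSqIdeal i₀`. -/
inductive YPart (n : ℕ)
  | one
  | lin (i : Fin n)
  | sq

noncomputable def YPart.exp (i₀ : Fin n) : YPart n → Unit ⊕ Fin n →₀ ℕ
  | .one => 0
  | .lin i => Finsupp.single (Sum.inr i) 1
  | .sq => Finsupp.single (Sum.inr i₀) 2

noncomputable def YPart.dualExp (i₀ : Fin n) : YPart n → Unit ⊕ Fin n →₀ ℕ
  | .one => Finsupp.single (Sum.inr i₀) 2
  | .lin i => Finsupp.single (Sum.inr i) 1
  | .sq => 0

noncomputable def normalExp (i₀ : Fin n) (p : Fin 3 × YPart n) : Unit ⊕ Fin n →₀ ℕ :=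
  Finsupp.single (Sum.inl ()) (p.1 : ℕ) + p.2.exp i₀

noncomputable def dualExp (i₀ : Fin n) (p : Fin 3 × YPart n) : Unit ⊕ Fin n →₀ ℕ :=
  Finsupp.single (Sum.inl ()) (2 - (p.1 : ℕ)) + p.2.dualExp i₀

theorem YPart.exp_inl (i₀ : Fin n) (β : YPart n) : β.exp i₀ (Sum.inl ()) = 0 := by
  cases β <;> simp [exp]

theorem YPart.dualExp_inl (i₀ : Fin n) (β : YPart n) : β.dualExp i₀ (Sum.inl ()) = 0 := by
  cases β <;> simp [dualExp]

theorem YPart.dualExp_add_exp_eq_iff (i₀ : Fin n) (β β' : YPart n) :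
    (∃ j, Finsupp.single (Sum.inr j) 2 = β.dualExp i₀ + β'.exp i₀) ↔ β = β' := by
  constructor
  · rintro ⟨j, hj⟩
    have hy : ∀ k, (β.dualExp i₀ + β'.exp i₀) (Sum.inr k) = if j = k then 2 else 0 := fun k => by
      simp [← hj, Finsupp.single_apply]
    rcases β with _ | i | _ <;> rcases β' with _ | i' | _
    case one.one | sq.sq => rfl
    case lin.lin =>
      have hi := hy i
      simp only [dualExp, exp, Finsupp.add_apply, Finsupp.single_apply, Sum.inr.injEq] at hi
      split_ifs at hi <;> first | omega | (subst_vars; rfl)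
    case one.lin | sq.lin =>
      have hi := hy i'
      simp only [dualExp, exp, Finsupp.add_apply, Finsupp.single_apply, Sum.inr.injEq,
        Finsupp.coe_zero, Pi.zero_apply] at hi
      split_ifs at hi <;> omega
    case lin.one | lin.sq =>
      have hi := hy i
      simp only [dualExp, exp, Finsupp.add_apply, Finsupp.single_apply, Sum.inr.injEq,
        Finsupp.coe_zero, Pi.zero_apply] at hi
      split_ifs at hi <;> omega
    all_goals
      have h₀ := hy i₀; have hj := hy j
      simp only [dualExp, exp, Finsupp.add_apply, Finsupp.single_apply, Sum.inr.injEq,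
        Finsupp.coe_zero, Pi.zero_apply] at h₀ hj
      split_ifs at h₀ hj <;> omega
  · rintro rfl
    cases β with
    | one => exact ⟨i₀, by simp [dualExp, exp]⟩
    | lin i => exact ⟨i, by simp [dualExp, exp, ← Finsupp.single_add]⟩
    | sq => exact ⟨i₀, by simp [dualExp, exp]⟩

theorem coeff_sqMulSumSq_dualExp_add_normalExp_ne_zero_iff (i₀ : Fin n) (p q : Fin 3 × YPart n) :
    (sqMulSumSq n).coeff (dualExp i₀ p + normalExp i₀ q) ≠ 0 ↔ p = q := by
  obtain ⟨a, β⟩ := p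
  obtain ⟨a', β'⟩ := q
  have hsplit : dualExp i₀ (a, β) + normalExp i₀ (a', β') =
      Finsupp.single (Sum.inl ()) (2 - (a : ℕ) + a') + (β.dualExp i₀ + β'.exp i₀) := by
    rw [dualExp, normalExp, Finsupp.single_add]; abel
  have hj : ∀ j, sqMulSumSqExp j = dualExp i₀ (a, β) + normalExp i₀ (a', β') ↔
      2 = 2 - (a : ℕ) + a' ∧ Finsupp.single (Sum.inr j) 2 = β.dualExp i₀ + β'.exp i₀ := fun j => by
    rw [hsplit, sqMulSumSqExp, single_add_eq_single_add_iff] <;>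
      simp [YPart.exp_inl, YPart.dualExp_inl]
  rw [coeff_sqMulSumSq_ne_zero_iff, exists_congr hj, exists_and_left,
    YPart.dualExp_add_exp_eq_iff, Prod.mk.injEq, Fin.ext_iff]
  exact and_congr_left' (by omega)

noncomputable def YPart.poly (i₀ : Fin n) : YPart n → MvPolynomial (Unit ⊕ Fin n) ℂ
  | .one => 1
  | .lin i => X (Sum.inr i)
  | .sq => X (Sum.inr i₀) ^ 2

theorem monomial_normalExp (i₀ : Fin n) (a : Fin 3) (β : YPart n) :
    monomial (normalExp i₀ (a, β)) 1 = X (Sum.inl ()) ^ (a : ℕ) * β.poly i₀ := by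
  cases β <;> simp [normalExp, YPart.exp, YPart.poly, X, monomial_pow, monomial_mul]

noncomputable def normalSpan (i₀ : Fin n) : Submodule ℂ (MvPolynomial (Unit ⊕ Fin n) ℂ) :=
  Submodule.span ℂ (Set.range fun p => monomial (normalExp i₀ p) 1)

theorem monomial_normalExp_mul_X_mem {i₀ i₁ : Fin n} (h : i₁ ≠ i₀) (p : Fin 3 × YPart n)
    (v : Unit ⊕ Fin n) :
    monomial (normalExp i₀ p) 1 * X v ∈ (sqMulSumSqIdeal i₀).restrictScalars ℂ ⊔ normalSpan i₀ := by
  have hI : ∀ q ∈ sqMulSumSqIdeal i₀, q ∈ (sqMulSumSqIdeal i₀).restrictScalars ℂ ⊔ normalSpan i₀ :=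
    fun q hq => Submodule.mem_sup_left hq
  have hN : ∀ (a : Fin 3) (β : YPart n), X (Sum.inl ()) ^ (a : ℕ) * β.poly i₀ ∈
      (sqMulSumSqIdeal i₀).restrictScalars ℂ ⊔ normalSpan i₀ := fun a β =>
    Submodule.mem_sup_right (monomial_normalExp i₀ a β ▸ Submodule.subset_span ⟨(a, β), rfl⟩)
  obtain ⟨a, β⟩ := p
  rw [monomial_normalExp]
  rcases v with ⟨⟩ | k
  · by_cases ha : (a : ℕ) + 1 < 3
    · convert hN ⟨a + 1, ha⟩ β using 1
      ring
    · refine hI _ ?_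
      rw [show (a : ℕ) = 2 by omega, mul_right_comm, ← pow_succ]
      exact Ideal.mul_mem_right _ _ (X_inl_pow_three_mem i₀)
  · rcases β with _ | i | _
    · convert hN a (.lin k) using 1
      simp [YPart.poly]
    · rcases eq_or_ne i k with rfl | hik
      · convert Submodule.sub_mem _ (hN a .sq) (hI _ (Ideal.mul_mem_left _
          (X (Sum.inl ()) ^ (a : ℕ)) (X_inr_sq_sub_X_inr_sq_mem i₀ i₀ i))) using 1
        simp only [YPart.poly]
        ring
      · refine hI _ ?_
        rw [YPart.poly, mul_assoc]
        exact Ideal.mul_mem_left _ _ (X_inr_mul_X_inr_mem i₀ hik)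
    · refine hI _ ?_
      rcases eq_or_ne k i₀ with rfl | hk
      · rw [YPart.poly, mul_assoc, ← pow_succ]
        exact Ideal.mul_mem_left _ _ (X_inr_pow_three_mem k h)
      · rw [YPart.poly, sq, mul_assoc, mul_assoc, ← mul_assoc]
        exact Ideal.mul_mem_left _ _ (X_inr_mul_X_inr_mem i₀ hk.symm)

theorem mem_sqMulSumSqIdeal_sup_normalSpan {i₀ i₁ : Fin n} (h : i₁ ≠ i₀)
    (g : MvPolynomial (Unit ⊕ Fin n) ℂ) :
    g ∈ (sqMulSumSqIdeal i₀).restrictScalars ℂ ⊔ normalSpan i₀ := by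
  induction g using MvPolynomial.induction_on with
  | C c =>
    rw [C_eq_smul_one]
    refine Submodule.smul_mem _ c (Submodule.mem_sup_right ?_)
    have h1 : monomial (normalExp i₀ (0, .one)) 1 ∈ normalSpan i₀ := Submodule.subset_span ⟨_, rfl⟩
    simpa [monomial_normalExp, YPart.poly] using h1
  | add p q hp hq => exact add_mem hp hq
  | mul_X p v hp =>
    obtain ⟨u, hu, r, hr, rfl⟩ := Submodule.mem_sup.1 hp
    rw [add_mul]
    refine add_mem (Submodule.mem_sup_left (Ideal.mul_mem_right _ _ hu)) ?_
    have hle : normalSpan i₀ ≤ ((sqMulSumSqIdeal i₀).restrictScalars ℂ ⊔ normalSpan i₀).comap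
        (LinearMap.mulRight ℂ (X v)) :=
      Submodule.span_le.2 (by rintro _ ⟨p, rfl⟩; exact monomial_normalExp_mul_X_mem h p v)
    exact hle hr

theorem annihilator_sqMulSumSq {i₀ i₁ : Fin n} (h : i₁ ≠ i₀) :
    annihilator (sqMulSumSq n) = sqMulSumSqIdeal i₀ := by
  refine le_antisymm (fun g hg => ?_) (sqMulSumSqIdeal_le_annihilator i₀)
  obtain ⟨u, hu, r, hr, rfl⟩ := Submodule.mem_sup.1 (mem_sqMulSumSqIdeal_sup_normalSpan h g)
  have hr0 : apolar r (sqMulSumSq n) = 0 := by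
    have := (annihilator _).sub_mem hg (sqMulSumSqIdeal_le_annihilator i₀ hu)
    rwa [add_sub_cancel_left] at this
  rw [eq_zero_of_apolar_eq_zero (coeff_sqMulSumSq_dualExp_add_normalExp_ne_zero_iff i₀) hr hr0,
    add_zero]
  exact hu

end SqMulSumSq

/-- For `F = x^2(y_1^2 + ⋯ + y_n^2)` with `n ≥ 2`, the annihilator
`F^⊥ = {g | g ∘ F = 0}` equals the ideal
`(X^3, {Y_1^2 − Y_i^2}_{2 ≤ i ≤ n}, {Y_iY_j}_{1 ≤ i < j ≤ n})`. -/
theorem statement1 (n : ℕ) (hn : 2 ≤ n) :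
    ∀ g : MvPolynomial (Unit ⊕ Fin n) ℂ,
      apolar g ((X (Sum.inl ())) ^ 2 * ∑ j, (X (Sum.inr j)) ^ 2) = 0 ↔
      g ∈ Ideal.span
        ({(X (Sum.inl ()) : MvPolynomial (Unit ⊕ Fin n) ℂ) ^ 3} ∪
         {p | ∃ i : Fin n, i ≠ ⟨0, by omega⟩ ∧
            p = X (Sum.inr (⟨0, by omega⟩ : Fin n)) ^ 2 - X (Sum.inr i) ^ 2} ∪
         {p | ∃ i j : Fin n, i < j ∧ p = X (Sum.inr i) * X (Sum.inr j)}) := fun g =>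
  SetLike.ext_iff.1 (annihilator_sqMulSumSq (i₁ := ⟨1, by omega⟩) (by simp)) g
end

section
/- Let 𝕏 be a finite set of points in ℙ^{m+n−1} with homogeneous coordinate ring ℂ[X_1,...,X_m,Y_1,...,Y_n], such that no point of 𝕏 lies in the center of projection V(Y_1,...,Y_n). Let 𝕐 be the image of 𝕏 under projection from V(Y_1,...,Y_n) onto V(X_1,...,X_m). Then I(𝕐) = (X_1,...,X_m) + (I(𝕏) ∩ ℂ[Y_1,...,Y_n]). -/
/-!
Let `φ` be the substitution setting the `X`-variables to zero. Then `f - φ f ∈ (X_1,…,X_m)`,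
`φ f` only involves the `Y`-variables, and evaluating `φ f` at a point is evaluating `f` at its
projection. So if `f` vanishes on the projected points, `φ f` vanishes on the original ones, and
`f = (f - φ f) + φ f` lies in the right-hand side. Conversely, the `X_i` vanish on the projected
points, and a polynomial in the `Y`-variables alone takes the same value at a point and at its
projection.
-/

open MvPolynomial
open scoped Classical

/-- Vanishing ideal of a set of (representative vectors of) projective points:
all polynomials vanishing on the corresponding lines through the origin. -/
noncomputable def vIdeal {σ : Type*} (S : Set (σ → ℂ)) : Ideal (MvPolynomial σ ℂ) :=
  ⨅ v ∈ S, ⨅ c : ℂ, RingHom.ker (MvPolynomial.eval (c • v))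

namespace MvPolynomial

variable {R σ : Type*}

section CommSemiring

variable [CommSemiring R] (s : Set σ)

noncomputable def zeroOutside : MvPolynomial σ R →ₐ[R] MvPolynomial σ R :=
  aeval (s.indicator X)

theorem zeroOutside_mem_supported (f : MvPolynomial σ R) :
    zeroOutside s f ∈ supported R s := by
  have hadjoin : zeroOutside s f ∈
      Algebra.adjoin R (Set.range (s.indicator (X : σ → MvPolynomial σ R))) := by
    rw [Algebra.adjoin_range_eq_range_aeval]
    exact ⟨f, rfl⟩
  refine Algebra.adjoin_le (Set.range_subset_iff.2 fun i => ?_) hadjoin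
  by_cases hi : i ∈ s
  · rw [Set.indicator_of_mem hi]
    exact Algebra.subset_adjoin ⟨i, hi, rfl⟩
  · simp [hi]

theorem zeroOutside_of_mem_supported {f : MvPolynomial σ R} (hf : f ∈ supported R s) :
    zeroOutside s f = f := by
  rw [supported_eq_range_rename, AlgHom.mem_range] at hf
  obtain ⟨p, rfl⟩ := hf
  rw [zeroOutside, aeval_rename, rename_eq_aeval]
  congr 2
  funext i
  simp [i.2]

theorem eval_zeroOutside (w : σ → R) (f : MvPolynomial σ R) :
    eval w (zeroOutside s f) = eval (s.indicator w) f := by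
  have : (aeval (R := R) w).comp (zeroOutside s) = aeval (s.indicator w) := by
    rw [zeroOutside, comp_aeval]
    congr 1
    funext i
    by_cases hi : i ∈ s <;> simp [hi]
  simpa [coe_aeval_eq_eval] using DFunLike.congr_fun this f

end CommSemiring

theorem sub_zeroOutside_mem_span_X_compl [CommRing R] (s : Set σ) (f : MvPolynomial σ R) :
    f - zeroOutside s f ∈ Ideal.span (X '' sᶜ) := by
  set J : Ideal (MvPolynomial σ R) := Ideal.span (X '' sᶜ)
  suffices (Ideal.Quotient.mkₐ R J).comp (zeroOutside s) = Ideal.Quotient.mkₐ R J by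
    rw [← Ideal.Quotient.eq]
    exact (DFunLike.congr_fun this f).symm
  refine algHom_ext fun i => ?_
  by_cases hi : i ∈ s
  · simp [zeroOutside, hi]
  · have hXi : X i ∈ J := Ideal.subset_span ⟨i, hi, rfl⟩
    simpa [zeroOutside, hi] using (Ideal.Quotient.eq_zero_iff_mem.2 hXi).symm

end MvPolynomial

theorem mem_vIdeal {σ : Type*} {S : Set (σ → ℂ)} {f : MvPolynomial σ ℂ} :
    f ∈ vIdeal S ↔ ∀ v ∈ S, ∀ c : ℂ, eval (c • v) f = 0 := by
  simp [vIdeal, Submodule.mem_iInf, RingHom.mem_ker]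

theorem vIdeal_image_indicator {σ : Type*} (S : Set (σ → ℂ)) (s : Set σ) :
    vIdeal ((fun v => s.indicator v) '' S) =
      Ideal.span (X '' sᶜ) ⊔ Ideal.span (vIdeal S ∩ supported ℂ s) := by
  have indicator_smul (c : ℂ) (v : σ → ℂ) : s.indicator (c • v) = c • s.indicator v :=
    Set.indicator_const_smul s c v
  apply le_antisymm
  · intro f hf
    rw [← sub_add_cancel f (zeroOutside s f)]
    refine Submodule.add_mem_sup (sub_zeroOutside_mem_span_X_compl s f)
      (Ideal.subset_span ⟨?_, zeroOutside_mem_supported s f⟩)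
    rw [mem_vIdeal] at hf
    rw [SetLike.mem_coe, mem_vIdeal]
    intro v hv c
    rw [eval_zeroOutside, indicator_smul]
    exact hf _ (Set.mem_image_of_mem _ hv) c
  · refine sup_le (Ideal.span_le.2 ?_) (Ideal.span_le.2 ?_)
    · rintro _ ⟨i, hi, rfl⟩
      rw [SetLike.mem_coe, mem_vIdeal]
      rintro _ ⟨v, -, rfl⟩ c
      simp [Set.indicator_of_notMem hi]
    · rintro g ⟨hgS, hgs⟩
      rw [SetLike.mem_coe, mem_vIdeal] at hgS ⊢
      rintro _ ⟨v, hv, rfl⟩ c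
      rw [← indicator_smul, ← eval_zeroOutside, zeroOutside_of_mem_supported s hgs]
      exact hgS v hv c

theorem statement5_general (m n : ℕ) (𝕏 : Finset ((Fin m ⊕ Fin n) → ℂ)) :
    vIdeal ↑(𝕏.image fun v =>
        Sum.elim (fun _ : Fin m => (0 : ℂ)) fun j : Fin n => v (Sum.inr j)) =
      Ideal.span (Set.range fun i : Fin m =>
        (X (Sum.inl i) : MvPolynomial (Fin m ⊕ Fin n) ℂ)) ⊔
      Ideal.span (SetLike.coe (vIdeal (↑𝕏 : Set ((Fin m ⊕ Fin n) → ℂ))) ∩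
        SetLike.coe (MvPolynomial.supported ℂ
          (Set.range (Sum.inr : Fin n → Fin m ⊕ Fin n)))) := by
  have hπ : (fun v : (Fin m ⊕ Fin n) → ℂ =>
      Sum.elim (fun _ : Fin m => (0 : ℂ)) fun j : Fin n => v (Sum.inr j)) =
      fun v => (Set.range Sum.inr).indicator v := by
    funext v i
    cases i <;> simp
  have hX : (Set.range fun i : Fin m => (X (Sum.inl i) : MvPolynomial (Fin m ⊕ Fin n) ℂ)) =
      X '' (Set.range Sum.inr)ᶜ := by
    rw [Set.compl_range_inr, ← Set.range_comp]
    rfl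
  rw [Finset.coe_image, hπ, hX, vIdeal_image_indicator]

/-- If `𝕏` is a finite set of points of `ℙ^{m+n−1}` (given by nonzero representative
vectors), none lying in the center `V(Y_1,…,Y_n)`, and `𝕐` is its projection onto
`V(X_1,…,X_m)`, then `I(𝕐) = (X_1,…,X_m) + (I(𝕏) ∩ ℂ[Y_1,…,Y_n])`. -/
theorem statement5 (m n : ℕ) (𝕏 : Finset ((Fin m ⊕ Fin n) → ℂ))
    (h0 : ∀ v ∈ 𝕏, v ≠ 0)
    (hc : ∀ v ∈ 𝕏, ∃ j : Fin n, v (Sum.inr j) ≠ 0) :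
    vIdeal ↑(𝕏.image fun v =>
        Sum.elim (fun _ : Fin m => (0 : ℂ)) fun j : Fin n => v (Sum.inr j)) =
      Ideal.span (Set.range fun i : Fin m =>
        (X (Sum.inl i) : MvPolynomial (Fin m ⊕ Fin n) ℂ)) ⊔
      Ideal.span (SetLike.coe (vIdeal (↑𝕏 : Set ((Fin m ⊕ Fin n) → ℂ))) ∩
        SetLike.coe (MvPolynomial.supported ℂ
          (Set.range (Sum.inr : Fin n → Fin m ⊕ Fin n)))) :=
  statement5_general m n 𝕏
end

section
/- Let n ≥ 2 and let I = ({Y_iY_j}_{1≤i<j≤n}, X_1^2, X_2^2) in T = ℂ[X_1,X_2,Y_1,...,Y_n]. Then the Hilbert function of T/I is: 1 in degree 0, n+2 in degree 1, 3n+1 in degree 2, and 4n in every degree ≥ 3. -/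
open MvPolynomial
open scoped Classical

/-- Hilbert function in degree `d` of the graded quotient of the polynomial ring
by the `ℂ`-submodule `N`: the dimension of the image of the space of
degree-`d` homogeneous polynomials in the quotient. -/
noncomputable def hfQ {σ : Type*} (N : Submodule ℂ (MvPolynomial σ ℂ)) (d : ℕ) : ℕ :=
  Module.finrank ℂ ((homogeneousSubmodule σ ℂ d).map N.mkQ)

/-!
`I` is a monomial ideal, so the standard monomials (those divisible by no generator) of
degree `d` form a basis of `(T/I)_d`. A monomial `X^x Y^y` is standard iff `x ∈ {0,1}²` and
`Y^y` is a pure power `Y_i^k`. For each of the four `x`, the pure powers of degree `d - |x|`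
number `1` if `d = |x|`, `n` if `d > |x|` and `0` otherwise; summing over `x` gives
`1, n + 2, 3n + 1, 4n, 4n, …`.
-/

namespace Finsupp

theorem single_add_single_le_iff {σ : Type*} {x y : σ} (hxy : x ≠ y) (u : σ →₀ ℕ) :
    single x 1 + single y 1 ≤ u ↔ u x ≠ 0 ∧ u y ≠ 0 := by
  constructor
  · intro h
    have hx := h x
    have hy := h y
    simp only [coe_add, Pi.add_apply, single_eq_same, single_eq_of_ne hxy,
      single_eq_of_ne hxy.symm] at hx hy
    omega
  · rintro ⟨hx, hy⟩ z
    rw [coe_add, Pi.add_apply]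
    rcases eq_or_ne z x with rfl | hzx
    · rw [single_eq_same, single_eq_of_ne hxy]
      omega
    rcases eq_or_ne z y with rfl | hzy
    · rw [single_eq_same, single_eq_of_ne hxy.symm]
      omega
    · simp [single_eq_of_ne hzx, single_eq_of_ne hzy]

end Finsupp

namespace MvPolynomial

variable {σ K : Type*} [Field K]

theorem disjoint_restrictSupport {s t : Set (σ →₀ ℕ)} (h : Disjoint s t) :
    Disjoint (restrictSupport K s) (restrictSupport K t) := by
  refine Submodule.disjoint_def.2 fun p hs ht => ?_
  rw [← support_eq_empty, ← Finset.coe_eq_empty]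
  exact Set.subset_empty_iff.1 (h hs ht)

theorem map_mkQ_restrictSupport (s t : Set (σ →₀ ℕ)) :
    (restrictSupport K s).map (restrictSupport K t).mkQ =
      (restrictSupport K (s \ t)).map (restrictSupport K t).mkQ := by
  have hsup : restrictSupport K s = restrictSupport K (s \ t) ⊔ restrictSupport K (s ∩ t) := by
    rw [restrictSupport_eq_span, restrictSupport_eq_span, restrictSupport_eq_span,
      ← Submodule.span_union, ← Set.image_union, Set.sdiff_union_inter]
  have hzero : (restrictSupport K (s ∩ t)).map (restrictSupport K t).mkQ = ⊥ := by
    rw [eq_bot_iff, Submodule.map_le_iff_le_comap, Submodule.comap_bot, Submodule.ker_mkQ]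
    exact restrictSupport_mono K Set.inter_subset_right
  rw [hsup, Submodule.map_sup, hzero, sup_bot_eq]

theorem finrank_map_mkQ_restrictSupport (s t : Set (σ →₀ ℕ)) :
    Module.finrank K ((restrictSupport K s).map (restrictSupport K t).mkQ) =
      Nat.card ↥(s \ t) := by
  set f := (restrictSupport K t).mkQ ∘ₗ (restrictSupport K (s \ t)).subtype
  have hf : Function.Injective f := by
    rw [← LinearMap.ker_eq_bot, LinearMap.ker_comp, Submodule.ker_mkQ,
      ← Submodule.disjoint_iff_comap_eq_bot]
    exact disjoint_restrictSupport Set.disjoint_sdiff_left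
  rw [map_mkQ_restrictSupport, ← Submodule.range_subtype (restrictSupport K (s \ t)),
    ← LinearMap.range_comp, LinearMap.finrank_range_of_inj hf,
    Module.finrank_eq_nat_card_basis (basisRestrictSupport K (s \ t))]

theorem restrictScalars_span_monomial_image (G : Set (σ →₀ ℕ)) :
    (Ideal.span ((monomial · (1 : K)) '' G)).restrictScalars K =
      restrictSupport K {u | ∃ g ∈ G, g ≤ u} := by
  ext p
  rw [Submodule.restrictScalars_mem, mem_ideal_span_monomial_image, mem_restrictSupport_iff]
  rfl

end MvPolynomial

theorem hfQ_restrictSupport_compl {σ : Type*} (s : Set (σ →₀ ℕ)) (d : ℕ) :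
    hfQ (restrictSupport ℂ sᶜ) d = Nat.card ↥{u ∈ s | u.degree = d} := by
  rw [hfQ, homogeneousSubmodule_eq_finsupp_supported]
  refine (finrank_map_mkQ_restrictSupport _ _).trans (Nat.card_congr ?_)
  exact Equiv.subtypeEquivRight fun u => by simp [and_comm]

section StandardMonomials

open Finsupp Sum

variable {α ι : Type*}

def IsPurePower (y : ι →₀ ℕ) : Prop :=
  ∀ i j, i ≠ j → y i = 0 ∨ y j = 0

def IsStandard (u : α ⊕ ι →₀ ℕ) : Prop :=
  (∀ a, u (inl a) ≤ 1) ∧ IsPurePower (sumFinsuppEquivProdFinsupp u).2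

theorem isPurePower_single (i : ι) (k : ℕ) : IsPurePower (single i k) := by
  intro j j' hjj'
  rcases eq_or_ne j i with rfl | hj
  · exact Or.inr (single_eq_of_ne hjj'.symm)
  · exact Or.inl (single_eq_of_ne hj)

theorem IsPurePower.eq_single {y : ι →₀ ℕ} (hy : IsPurePower y) {i : ι} (hi : y i ≠ 0) :
    y = single i (y i) := by
  ext j
  rcases eq_or_ne j i with rfl | hj
  · simp
  · rw [single_eq_of_ne hj]
    exact (hy j i hj).resolve_right hi

theorem natCard_isPurePower_degree [Fintype ι] (m d : ℕ) :
    Nat.card {y : ι →₀ ℕ // IsPurePower y ∧ m + y.degree = d} =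
      if d < m then 0 else if d = m then 1 else Fintype.card ι := by
  rcases lt_trichotomy d m with hdm | rfl | hmd
  · rw [if_pos hdm, Nat.card_eq_zero]
    exact Or.inl ⟨fun y => by have := y.2.2; omega⟩
  · rw [if_neg (lt_irrefl d), if_pos rfl, Nat.card_eq_one_iff_unique]
    refine ⟨⟨fun y y' => Subtype.ext ?_⟩, ⟨⟨0, fun i j _ => Or.inl rfl, by simp⟩⟩⟩
    rw [(degree_eq_zero_iff y.1).1 (by have := y.2.2; omega),
      (degree_eq_zero_iff y'.1).1 (by have := y'.2.2; omega)]
  · rw [if_neg (by omega), if_neg (by omega), ← Nat.card_eq_fintype_card]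
    refine Nat.card_congr (Equiv.ofBijective (fun i => ⟨single i (d - m),
      isPurePower_single i _, by rw [degree_single]; omega⟩) ⟨fun i j h => ?_, fun y => ?_⟩).symm
    · exact single_left_injective (by omega) (congrArg Subtype.val h)
    · obtain ⟨y, hy, hdeg⟩ := y
      obtain ⟨i, hi⟩ := Finsupp.ne_iff.1 fun h0 : y = 0 => by simp [h0] at hdeg; omega
      rw [hy.eq_single hi, degree_single] at hdeg
      refine ⟨i, Subtype.ext ?_⟩
      change single i (d - m) = y
      rw [hy.eq_single hi, ← hdeg, Nat.add_sub_cancel_left]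

theorem degree_eq_sum_inl_add_degree_snd [Fintype α] [Fintype ι] (u : α ⊕ ι →₀ ℕ) :
    u.degree = ∑ a, u (inl a) + (sumFinsuppEquivProdFinsupp u).2.degree := by
  simp [degree_eq_sum, Fintype.sum_sum_type]

noncomputable def isStandardEquiv [Fintype α] [Fintype ι] (d : ℕ) :
    {u : α ⊕ ι →₀ ℕ // IsStandard u ∧ u.degree = d} ≃
      {p : (α → Fin 2) × (ι →₀ ℕ) // IsPurePower p.2 ∧ ∑ a, (p.1 a : ℕ) + p.2.degree = d} where
  toFun u := ⟨(fun a => ⟨u.1 (inl a), Nat.lt_succ_of_le (u.2.1.1 a)⟩,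
    (sumFinsuppEquivProdFinsupp u.1).2), u.2.1.2,
    (degree_eq_sum_inl_add_degree_snd u.1).symm.trans u.2.2⟩
  invFun p := ⟨sumElim (equivFunOnFinite.symm fun a => (p.1.1 a : ℕ)) p.1.2,
    ⟨fun a => by simpa using Nat.le_of_lt_succ (p.1.1 a).2, by simpa using p.2.1⟩, by
      rw [degree_eq_sum_inl_add_degree_snd]; simpa using p.2.2⟩
  left_inv u := by ext (a | i) <;> simp
  right_inv p := by ext <;> simp

theorem natCard_isStandard_degree [Fintype α] [DecidableEq α] [Fintype ι] (d : ℕ) :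
    Nat.card {u : α ⊕ ι →₀ ℕ // IsStandard u ∧ u.degree = d} =
      ∑ x : α → Fin 2,
        Nat.card {y : ι →₀ ℕ // IsPurePower y ∧ ∑ a, (x a : ℕ) + y.degree = d} := by
  have (x : α → Fin 2) :
      Finite {y : ι →₀ ℕ // IsPurePower y ∧ ∑ a, (x a : ℕ) + y.degree = d} :=
    ((finite_of_degree_le d).subset fun y hy => show y.degree ≤ d by have := hy.2; omega).to_subtype
  rw [Nat.card_congr ((isStandardEquiv d).trans (Equiv.subtypeProdEquivSigmaSubtype
    fun (x : α → Fin 2) (y : ι →₀ ℕ) => IsPurePower y ∧ ∑ a, (x a : ℕ) + y.degree = d)),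
    Nat.card_sigma]

theorem natCard_isStandard_fin_two [Fintype ι] (d : ℕ) :
    Nat.card {u : Fin 2 ⊕ ι →₀ ℕ // IsStandard u ∧ u.degree = d} =
      if d = 0 then 1 else if d = 1 then Fintype.card ι + 2
      else if d = 2 then 3 * Fintype.card ι + 1 else 4 * Fintype.card ι := by
  rw [natCard_isStandard_degree, ← (finTwoArrowEquiv (Fin 2)).symm.sum_comp,
    Fintype.sum_prod_type]
  simp only [natCard_isPurePower_degree, Fin.sum_univ_two, finTwoArrowEquiv_symm_apply,
    Matrix.cons_val_zero, Matrix.cons_val_one, Fin.isValue, Fin.val_zero, Fin.val_one]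
  split_ifs <;> omega

variable [LinearOrder ι]

variable (α ι) in
def relationExponents : Set (α ⊕ ι →₀ ℕ) :=
  {g | (∃ a, g = single (inl a) 2) ∨ ∃ i j, i < j ∧ g = single (inr i) 1 + single (inr j) 1}

theorem exists_relationExponents_le_iff (u : α ⊕ ι →₀ ℕ) :
    (∃ g ∈ relationExponents α ι, g ≤ u) ↔ ¬ IsStandard u := by
  simp only [relationExponents, IsStandard, IsPurePower, snd_sumFinsuppEquivProdFinsupp,
    Set.mem_ofPred_eq]
  constructor
  · rintro ⟨g, ⟨a, rfl⟩ | ⟨i, j, hij, rfl⟩, hg⟩ ⟨hX, hY⟩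
    · have := single_le_iff.1 hg
      have := hX a
      omega
    · rw [single_add_single_le_iff (inr_injective.ne hij.ne)] at hg
      exact (hY i j hij.ne).elim hg.1 hg.2
  · intro h
    rw [not_and_or] at h
    push Not at h
    rcases h with ⟨a, ha⟩ | ⟨i, j, hij, hi, hj⟩
    · exact ⟨_, Or.inl ⟨a, rfl⟩, single_le_iff.2 ha⟩
    rcases hij.lt_or_gt with hij | hji
    · exact ⟨_, Or.inr ⟨i, j, hij, rfl⟩,
        (single_add_single_le_iff (inr_injective.ne hij.ne) u).2 ⟨hi, hj⟩⟩
    · exact ⟨_, Or.inr ⟨j, i, hji, rfl⟩,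
        (single_add_single_le_iff (inr_injective.ne hji.ne) u).2 ⟨hj, hi⟩⟩

theorem quadraticMonomials_eq_image (K : Type*) [Field K] :
    ({p | ∃ i j : ι, i < j ∧ p = X (inr i) * X (inr j)} ∪ {X (inl 0) ^ 2, X (inl 1) ^ 2} :
      Set (MvPolynomial (Fin 2 ⊕ ι) K)) = (monomial · 1) '' relationExponents (Fin 2) ι := by
  ext p
  simp [relationExponents, X, monomial_mul, monomial_pow, Fin.exists_fin_two, or_and_right,
    exists_or, eq_comm, or_assoc]

end StandardMonomials

theorem statement10_general (n : ℕ) :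
    let I : Ideal (MvPolynomial (Fin 2 ⊕ Fin n) ℂ) := Ideal.span
      ({p | ∃ i j : Fin n, i < j ∧ p = X (Sum.inr i) * X (Sum.inr j)} ∪
       {(X (Sum.inl 0) : MvPolynomial (Fin 2 ⊕ Fin n) ℂ) ^ 2, (X (Sum.inl 1)) ^ 2})
    hfQ (Submodule.restrictScalars ℂ I) 0 = 1 ∧
    hfQ (Submodule.restrictScalars ℂ I) 1 = n + 2 ∧
    hfQ (Submodule.restrictScalars ℂ I) 2 = 3 * n + 1 ∧
    ∀ d, 3 ≤ d → hfQ (Submodule.restrictScalars ℂ I) d = 4 * n := by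
  intro I
  have hI : Submodule.restrictScalars ℂ I = restrictSupport ℂ {u | IsStandard u}ᶜ := by
    simp only [I, quadraticMonomials_eq_image, restrictScalars_span_monomial_image,
      exists_relationExponents_le_iff]
    rfl
  have hf (d : ℕ) : hfQ (Submodule.restrictScalars ℂ I) d =
      if d = 0 then 1 else if d = 1 then n + 2 else if d = 2 then 3 * n + 1 else 4 * n := by
    rw [hI, hfQ_restrictSupport_compl]
    exact (natCard_isStandard_fin_two d).trans (by rw [Fintype.card_fin])
  refine ⟨by simpa using hf 0, by simpa using hf 1, by simpa using hf 2, fun d hd => ?_⟩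
  rw [hf, if_neg (by omega), if_neg (by omega), if_neg (by omega)]

/-- For `n ≥ 2` and `I = ({Y_iY_j}_{i<j}, X_1^2, X_2^2)` in `ℂ[X_1,X_2,Y_1,…,Y_n]`, the
Hilbert function of `T/I` is `1, n+2, 3n+1` in degrees `0,1,2` and `4n` in degrees `≥ 3`. -/
theorem statement10 (n : ℕ) (hn : 2 ≤ n) :
    let I : Ideal (MvPolynomial (Fin 2 ⊕ Fin n) ℂ) := Ideal.span
      ({p | ∃ i j : Fin n, i < j ∧ p = X (Sum.inr i) * X (Sum.inr j)} ∪
       {(X (Sum.inl 0) : MvPolynomial (Fin 2 ⊕ Fin n) ℂ) ^ 2, (X (Sum.inl 1)) ^ 2})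
    hfQ (Submodule.restrictScalars ℂ I) 0 = 1 ∧
    hfQ (Submodule.restrictScalars ℂ I) 1 = n + 2 ∧
    hfQ (Submodule.restrictScalars ℂ I) 2 = 3 * n + 1 ∧
    ∀ d, 3 ≤ d → hfQ (Submodule.restrictScalars ℂ I) d = 4 * n :=
  statement10_general n
end

section
/- Let m, n ≥ 2 and F = (x_1^2 + ... + x_m^2)(y_1^2 + ... + y_n^2). Then the Waring rank of F satisfies rk F ≤ 2mn. -/
/-!
For `u v = 1`, expanding the fourth powers gives
`(v²/12) ((x + u y)⁴ + (x - u y)⁴) = x² y² + (v²/6) x⁴ + (u²/6) y⁴`,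
so two fourth powers give the monomial `x² y²` up to pure fourth powers.
Choosing `u_{ij} = a_i / b_j` with nonzero `a, b` satisfying `∑ a_i² = ∑ b_j² = 0`
(rescaled roots of unity, which exist since `m, n ≥ 2`), the pure fourth powers cancel
after summing over all `m n` pairs `(i, j)`, so `F` is a combination of `2 m n` fourth powers.
-/

open MvPolynomial
open scoped Classical

/-- The Waring rank of a degree-`d` form `F`: the least `r` such that `F` is a
linear combination of `r` `d`-th powers of linear forms. -/
noncomputable def waringRank {σ : Type*} [Fintype σ] (d : ℕ) (F : MvPolynomial σ ℂ) : ℕ :=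
  sInf {r | ∃ c : Fin r → ℂ, ∃ L : Fin r → σ → ℂ,
    F = ∑ i, MvPolynomial.C (c i) * (∑ j, MvPolynomial.C (L i j) * X j) ^ d}

theorem waringRank_le_card {σ ι : Type*} [Fintype σ] [Fintype ι] {d : ℕ}
    {F : MvPolynomial σ ℂ} (c : ι → ℂ) (L : ι → σ → ℂ)
    (hF : F = ∑ p, C (c p) * (∑ s, C (L p s) * X s) ^ d) :
    waringRank d F ≤ Fintype.card ι := by
  let e := Fintype.equivFin ι
  refine Nat.sInf_le ⟨fun k => c (e.symm k), fun k => L (e.symm k), ?_⟩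
  rw [hF, ← e.symm.sum_comp]

theorem exists_ne_zero_sum_sq_eq_zero {k : ℕ} (hk : 2 ≤ k) :
    ∃ a : Fin k → ℂ, (∀ i, a i ≠ 0) ∧ ∑ i, a i ^ 2 = 0 := by
  have hζ := Complex.isPrimitiveRoot_exp k (by omega)
  refine ⟨fun i => Complex.exp (Real.pi * Complex.I / k) ^ (i : ℕ),
    fun i => pow_ne_zero _ (Complex.exp_ne_zero _), ?_⟩
  have hsq : Complex.exp (Real.pi * Complex.I / k) ^ 2 =
      Complex.exp (2 * Real.pi * Complex.I / k) := by
    rw [← Complex.exp_nat_mul]; ring_nf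
  simp_rw [← pow_mul, mul_comm _ 2, pow_mul, hsq]
  rw [Fin.sum_univ_eq_sum_range (fun i => Complex.exp (2 * Real.pi * Complex.I / k) ^ i)]
  exact hζ.geom_sum_eq_zero (by omega)

theorem mul_sq_mul_add_pow_four_add_mul_sq_mul_sub_pow_four {R : Type*} [CommRing R]
    (x y u v w : R) (huv : u * v = 1) (hw : 12 * w = 1) :
    w * v ^ 2 * (x + u * y) ^ 4 + w * v ^ 2 * (x - u * y) ^ 4 =
      x ^ 2 * y ^ 2 + 2 * w * v ^ 2 * x ^ 4 + 2 * w * u ^ 2 * y ^ 4 := by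
  linear_combination
    (12 * w * (u * v + 1) * x ^ 2 * y ^ 2 + 2 * w * u ^ 2 * (u * v + 1) * y ^ 4) * huv +
      x ^ 2 * y ^ 2 * hw

theorem sum_sq_mul_sum_sq_eq_sum_pow_four {R ι κ : Type*} [CommRing R] [Fintype ι]
    [Fintype κ] (x : ι → R) (y : κ → R) (u v : ι → κ → R) (w : R)
    (huv : ∀ i j, u i j * v i j = 1) (hu : ∀ j, ∑ i, u i j ^ 2 = 0)
    (hv : ∀ i, ∑ j, v i j ^ 2 = 0) (hw : 12 * w = 1) :
    (∑ i, x i ^ 2) * ∑ j, y j ^ 2 = ∑ i, ∑ j,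
      (w * v i j ^ 2 * (x i + u i j * y j) ^ 4 + w * v i j ^ 2 * (x i - u i j * y j) ^ 4) := by
  simp only [mul_sq_mul_add_pow_four_add_mul_sq_mul_sub_pow_four _ _ _ _ _ (huv _ _) hw,
    Finset.sum_add_distrib]
  have hx : ∀ i, ∑ j, 2 * w * v i j ^ 2 * x i ^ 4 = 0 := fun i => by
    simp only [← Finset.sum_mul, ← Finset.mul_sum, hv, mul_zero, zero_mul]
  have hy : ∑ i, ∑ j, 2 * w * u i j ^ 2 * y j ^ 4 = 0 := by
    rw [Finset.sum_comm]
    simp only [← Finset.sum_mul, ← Finset.mul_sum, hu, mul_zero, zero_mul,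
      Finset.sum_const_zero]
  simp only [hx, hy, Finset.sum_const_zero, add_zero, Finset.sum_mul_sum]

theorem sum_C_div_sq_eq_zero {K σ ι : Type*} [Field K] [Fintype ι] {a : ι → K}
    (ha : ∑ i, a i ^ 2 = 0) (c : K) : ∑ i, (C (a i / c) : MvPolynomial σ K) ^ 2 = 0 := by
  simp only [← map_pow, ← map_sum, div_pow, ← Finset.sum_div, ha, zero_div, map_zero]

theorem sum_C_elim_single_mul_X {R σ τ : Type*} [CommSemiring R] [Fintype σ] [Fintype τ]
    [DecidableEq σ] [DecidableEq τ] (i : σ) (j : τ) (a b : R) :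
    ∑ s, C (Sum.elim (Pi.single i a) (Pi.single j b) s) * (X s : MvPolynomial (σ ⊕ τ) R) =
      C a * X (Sum.inl i) + C b * X (Sum.inr j) := by
  simp [Fintype.sum_sum_type, Pi.single_apply, apply_ite C, ite_mul]

/-- For `m, n ≥ 2` and `F = (x_1^2 + ⋯ + x_m^2)(y_1^2 + ⋯ + y_n^2)`, `rk F ≤ 2mn`. -/
theorem statement14 (m n : ℕ) (hm : 2 ≤ m) (hn : 2 ≤ n) :
    waringRank 4 ((∑ i, (X (Sum.inl i) : MvPolynomial (Fin m ⊕ Fin n) ℂ) ^ 2) *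
      ∑ j, (X (Sum.inr j)) ^ 2) ≤ 2 * m * n := by
  obtain ⟨a, ha0, ha⟩ := exists_ne_zero_sum_sq_eq_zero hm
  obtain ⟨b, hb0, hb⟩ := exists_ne_zero_sum_sq_eq_zero hn
  have hcard : Fintype.card (Fin m × Fin n × Bool) = 2 * m * n := by
    simp only [Fintype.card_prod, Fintype.card_fin, Fintype.card_bool]; ring
  refine hcard ▸ waringRank_le_card (fun p => 12⁻¹ * (b p.2.1 / a p.1) ^ 2)
    (fun p => Sum.elim (Pi.single p.1 1)
      (Pi.single p.2.1 (if p.2.2 then a p.1 / b p.2.1 else -(a p.1 / b p.2.1)))) ?_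
  rw [sum_sq_mul_sum_sq_eq_sum_pow_four _ _ (fun i j => C (a i / b j))
    (fun i j => C (b j / a i)) (C 12⁻¹)]
  · simp only [Fintype.sum_prod_type, Fintype.sum_bool, sum_C_elim_single_mul_X, if_true,
      Bool.false_eq_true, if_false, map_one, one_mul, map_neg, neg_mul, sub_eq_add_neg,
      map_mul, map_pow]
  · intro i j
    rw [← map_mul, div_mul_div_cancel₀ (hb0 j), div_self (ha0 i), map_one]
  · exact fun j => sum_C_div_sq_eq_zero ha (b j)
  · exact fun i => sum_C_div_sq_eq_zero hb (a i)
  · rw [← map_ofNat C 12, ← map_mul, mul_inv_cancel₀ (by norm_num), map_one]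
end
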